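/- Let d, n, T ≥ 1, let K ⊆ [0,1]^d be convex, let u ∈ K, and set α = (1 − ‖u‖_∞)/4. For each t ∈ {1,…,T} and j ∈ {1,…,n}, let f_t^j : ℝ^d → ℝ be continuous DR-submodular and nonnegative on X = [0,1]^d, differentiable on X with continuous gradient satisfying ‖∇f_t^j(x)‖ ≤ G for all x ∈ X, let x̂_t^j ∈ K, set x_t^j = (x̂_t^j + u)/2, and define g_t^j(x) = ∫_0^1 (1/(8(1 − z/2)^3)) · ∇f_t^j((z/2)(x − u) + u) dz. Then for every i ∈ {1,…,n} and every x ∈ K: α·Σ_{t=1}^T Σ_{j=1}^n f_t^j(x) − Σ_{t=1}^T Σ_{j=1}^n f_t^j(x_t^i) ≤ Σ_{t=1}^T Σ_{j=1}^n ⟨g_t^j(x̂_t^j), x − x̂_t^i⟩ + G·Σ_{t=1}^T Σ_{j=1}^n ‖x̂_t^j − x̂_t^i‖. -/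

import Mathlib

/-!
A differentiable DR-submodular function has a coordinatewise antitone gradient, so it is concave
along nonnegative directions. At a point `p` of the cube this gives
`f (p ∨ y) + f (p ∧ y) - 2 f p ≤ ⟪∇f p, y - p⟫`, and concavity on the ray from `y` through
`p ∨ y` together with `f ≥ 0` gives `(1 - m) f y ≤ f (p ∨ y)` whenever `p ≤ m` coordinatewise.
On the segment `p z = u + (z/2) (x̂ - u)` one may take `m = z/2 + (1 - z/2) ν`. Weighting the
resulting inequality by `w z = 1 / (8 (1 - z/2)³)` turns the terms in `f (p z)` into the exact
derivative of `f (p z) / (4 (1 - z/2)²)`, and integrating over `[0, 1]` gives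
`(1 - ν)/4 · f y - f x_dec ≤ ⟪g x̂, y - x̂⟫`. Moving from `x̂ⱼ` to `x̂ᵢ` costs at most
`(3/8 + 1/2) G ‖x̂ⱼ - x̂ᵢ‖`, since `‖g‖ ≤ 3G/8` and `f` is `G`-Lipschitz.
-/

open MeasureTheory Finset

noncomputable section

def cube (d : ℕ) : Set (EuclideanSpace ℝ (Fin d)) :=
  {x | ∀ i, x i ∈ Set.Icc (0 : ℝ) 1}

/-- `f` is continuous DR-submodular on the unit cube `[0,1]^d`: for coordinatewise
comparable points `x ≤ y` in the cube and any feasible move of size `z ≥ 0` along a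
coordinate direction, the gain at `x` dominates the gain at `y`. -/
def DRSubmodularOn (d : ℕ) (f : EuclideanSpace ℝ (Fin d) → ℝ) : Prop :=
  ∀ x y : EuclideanSpace ℝ (Fin d), x ∈ cube d → y ∈ cube d → (∀ i, x i ≤ y i) →
    ∀ (j : Fin d) (z : ℝ), 0 ≤ z →
      x + z • EuclideanSpace.single j (1 : ℝ) ∈ cube d →
      y + z • EuclideanSpace.single j (1 : ℝ) ∈ cube d →
      f (y + z • EuclideanSpace.single j (1 : ℝ)) - f y ≤
        f (x + z • EuclideanSpace.single j (1 : ℝ)) - f x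

section

open Set Filter Topology intervalIntegral

variable {d : ℕ}

local notation "E" => EuclideanSpace ℝ (Fin d)

variable {f : EuclideanSpace ℝ (Fin d) → ℝ}
  {f' : EuclideanSpace ℝ (Fin d) → EuclideanSpace ℝ (Fin d)}

theorem convex_cube : Convex ℝ (cube d) := by
  intro x hx y hy a b ha hb hab i
  obtain ⟨hx0, hx1⟩ := hx i
  obtain ⟨hy0, hy1⟩ := hy i
  simp only [PiLp.add_apply, PiLp.smul_apply, smul_eq_mul]
  constructor <;> nlinarith

theorem hasDerivWithinAt_comp_add_smul {C : Set E}
    (hgrad : ∀ x ∈ C, HasGradientWithinAt f (f' x) C x)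
    {b v : E} {S : Set ℝ} (hS : ∀ s ∈ S, b + s • v ∈ C) {s : ℝ} (hs : s ∈ S) :
    HasDerivWithinAt (fun s : ℝ => f (b + s • v)) (inner ℝ (f' (b + s • v)) v) S s := by
  have hline : HasDerivWithinAt (fun s : ℝ => b + s • v) v S s := by
    simpa using (((hasDerivAt_id s).smul_const v).const_add b).hasDerivWithinAt
  exact (hgrad _ (hS s hs)).hasFDerivWithinAt.comp_hasDerivWithinAt s hline hS

theorem tendsto_secant_div {C : Set E} (hgrad : ∀ x ∈ C, HasGradientWithinAt f (f' x) C x)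
    {c w e : E} (hmem : ∀ s ∈ Icc (0 : ℝ) 1, c + s • w ∈ C ∧ c + s • w + s • e ∈ C) :
    Tendsto (fun s => (f (c + s • w + s • e) - f (c + s • w)) / s) (𝓝[>] 0)
      (𝓝 (inner ℝ (f' c) e)) := by
  have h0 : (0 : ℝ) ∈ Icc (0 : ℝ) 1 := left_mem_Icc.2 zero_le_one
  have hup : HasDerivWithinAt (fun s : ℝ => f (c + s • w + s • e))
      (inner ℝ (f' c) (w + e)) (Icc 0 1) 0 := by
    simpa only [smul_add, add_assoc, zero_smul, add_zero] using
      hasDerivWithinAt_comp_add_smul hgrad (v := w + e)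
        (fun s hs => by simpa only [smul_add, ← add_assoc] using (hmem s hs).2) h0
  have hlo : HasDerivWithinAt (fun s : ℝ => f (c + s • w)) (inner ℝ (f' c) w) (Icc 0 1) 0 := by
    simpa only [zero_smul, add_zero] using
      hasDerivWithinAt_comp_add_smul hgrad (fun s hs => (hmem s hs).1) h0
  have hsecant := hup.sub hlo
  rw [← inner_sub_right, add_sub_cancel_left] at hsecant
  refine ((hasDerivWithinAt_iff_tendsto_slope' (s := Ioi 0) (lt_irrefl 0)).1
    (hsecant.mono_of_mem_nhdsWithin (Icc_mem_nhdsGT_of_mem ⟨le_rfl, zero_lt_one⟩))).congr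
    fun s => ?_
  simp [slope_def_field]

/-- Secants of length `s` along `e_j` through `c ∈ {a, b}`, split in the ratio `c j : 1 - c j`,
stay in the cube for every `s ∈ [0, 1]`, so comparing them by DR-submodularity needs no case
distinction on whether `a` or `b` lies on a face of the cube. -/
theorem DRSubmodularOn.grad_apply_antitone (hsub : DRSubmodularOn d f)
    (hgrad : ∀ x ∈ cube d, HasGradientWithinAt f (f' x) (cube d) x)
    {a b : E} (ha : a ∈ cube d) (hb : b ∈ cube d) (hab : ∀ i, a i ≤ b i) (j : Fin d) :
    f' b j ≤ f' a j := by
  set e : E := EuclideanSpace.single j 1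
  set w : E → E := fun c => -(c j) • e
  have hcoord : ∀ (c : E) (s : ℝ) (i : Fin d),
      (c + s • w c) i = c i - if i = j then s * c j else 0 := by
    intro c s i; by_cases h : i = j <;> simp [w, e, h]; ring
  have hmem : ∀ c ∈ cube d, ∀ s ∈ Icc (0 : ℝ) 1,
      c + s • w c ∈ cube d ∧ c + s • w c + s • e ∈ cube d := by
    intro c hc s ⟨hs0, hs1⟩
    obtain ⟨hcj0, hcj1⟩ := hc j
    refine ⟨fun i => ?_, fun i => ?_⟩ <;> obtain ⟨hc0, hc1⟩ := hc i <;>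
      by_cases h : i = j <;> simp [hcoord, e, h] <;> constructor <;> nlinarith
  have hpartial : ∀ c : E, inner ℝ (f' c) e = f' c j := fun c => by
    simp [e, EuclideanSpace.inner_single_right]
  refine le_of_tendsto_of_tendsto (hpartial b ▸ tendsto_secant_div hgrad (hmem b hb))
    (hpartial a ▸ tendsto_secant_div hgrad (hmem a ha)) ?_
  filter_upwards [Ioc_mem_nhdsGT zero_lt_one] with s hs
  have hs' : s ∈ Icc (0 : ℝ) 1 := Ioc_subset_Icc_self hs
  have hle : ∀ i, (a + s • w a) i ≤ (b + s • w b) i := by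
    intro i
    by_cases h : i = j
    · subst h; simp only [hcoord, if_true]; nlinarith [hab i, hs.2]
    · simpa [hcoord, h] using hab i
  exact div_le_div_of_nonneg_right (hsub _ _ (hmem a ha s hs').1 (hmem b hb s hs').1 hle j s
    hs.1.le (hmem a ha s hs').2 (hmem b hb s hs').2) hs.1.le

theorem DRSubmodularOn.inner_grad_antitone (hsub : DRSubmodularOn d f)
    (hgrad : ∀ x ∈ cube d, HasGradientWithinAt f (f' x) (cube d) x)
    {a b v : E} (ha : a ∈ cube d) (hb : b ∈ cube d) (hab : ∀ i, a i ≤ b i)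
    (hv : ∀ i, 0 ≤ v i) :
    inner ℝ (f' b) v ≤ inner ℝ (f' a) v := by
  simp only [PiLp.inner_apply, RCLike.inner_apply, conj_trivial]
  exact Finset.sum_le_sum fun i _ =>
    mul_le_mul_of_nonneg_left (hsub.grad_apply_antitone hgrad ha hb hab i) (hv i)

theorem DRSubmodularOn.concaveOn_comp_add_smul (hsub : DRSubmodularOn d f)
    (hgrad : ∀ x ∈ cube d, HasGradientWithinAt f (f' x) (cube d) x)
    {b v : E} (hb : b ∈ cube d) (hbv : b + v ∈ cube d) (hv : ∀ i, 0 ≤ v i) :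
    ConcaveOn ℝ (Icc 0 1) (fun s : ℝ => f (b + s • v)) := by
  have hmem : ∀ s ∈ Icc (0 : ℝ) 1, b + s • v ∈ cube d :=
    fun s hs => convex_cube.add_smul_mem hb hbv hs
  have hderiv : ∀ s ∈ Ioo (0 : ℝ) 1,
      HasDerivAt (fun s : ℝ => f (b + s • v)) (inner ℝ (f' (b + s • v)) v) s :=
    fun s hs => (hasDerivWithinAt_comp_add_smul hgrad hmem (Ioo_subset_Icc_self hs)).hasDerivAt
      (Icc_mem_nhds hs.1 hs.2)
  refine AntitoneOn.concaveOn_of_deriv (convex_Icc 0 1)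
    (fun s hs => (hasDerivWithinAt_comp_add_smul hgrad hmem hs).continuousWithinAt) ?_ ?_
  · rw [interior_Icc]
    exact fun s hs => (hderiv s hs).differentiableAt.differentiableWithinAt
  · rw [interior_Icc]
    intro s hs t ht hst
    rw [(hderiv s hs).deriv, (hderiv t ht).deriv]
    refine hsub.inner_grad_antitone hgrad (hmem s (Ioo_subset_Icc_self hs))
      (hmem t (Ioo_subset_Icc_self ht)) (fun i => ?_) hv
    simpa using mul_le_mul_of_nonneg_right hst (hv i)

theorem DRSubmodularOn.sub_le_inner_grad (hsub : DRSubmodularOn d f)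
    (hgrad : ∀ x ∈ cube d, HasGradientWithinAt f (f' x) (cube d) x)
    {b v : E} (hb : b ∈ cube d) (hbv : b + v ∈ cube d) (hv : ∀ i, 0 ≤ v i) :
    f (b + v) - f b ≤ inner ℝ (f' b) v := by
  have h := (hsub.concaveOn_comp_add_smul hgrad hb hbv hv).slope_le_of_hasDerivWithinAt
    (left_mem_Icc.2 zero_le_one) (right_mem_Icc.2 zero_le_one) zero_lt_one
    (hasDerivWithinAt_comp_add_smul hgrad (fun s hs => convex_cube.add_smul_mem hb hbv hs)
      (left_mem_Icc.2 zero_le_one))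
  simpa [slope_def_field] using h

theorem DRSubmodularOn.inner_grad_le_sub (hsub : DRSubmodularOn d f)
    (hgrad : ∀ x ∈ cube d, HasGradientWithinAt f (f' x) (cube d) x)
    {b v : E} (hb : b ∈ cube d) (hbv : b + v ∈ cube d) (hv : ∀ i, 0 ≤ v i) :
    inner ℝ (f' (b + v)) v ≤ f (b + v) - f b := by
  have h := (hsub.concaveOn_comp_add_smul hgrad hb hbv hv).le_slope_of_hasDerivWithinAt
    (left_mem_Icc.2 zero_le_one) (right_mem_Icc.2 zero_le_one) zero_lt_one
    (hasDerivWithinAt_comp_add_smul hgrad (fun s hs => convex_cube.add_smul_mem hb hbv hs)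
      (right_mem_Icc.2 zero_le_one))
  simpa [slope_def_field] using h

/-- `p ∨ y` in the paper (with `coordMin` for `p ∧ y`): `EuclideanSpace` carries no lattice
order. -/
def coordMax (p y : E) : E := WithLp.toLp 2 fun i => max (p i) (y i)

def coordMin (p y : E) : E := WithLp.toLp 2 fun i => min (p i) (y i)

@[simp] theorem coordMax_apply (p y : E) (i : Fin d) : coordMax p y i = max (p i) (y i) := rfl

@[simp] theorem coordMin_apply (p y : E) (i : Fin d) : coordMin p y i = min (p i) (y i) := rfl

theorem coordMax_mem_cube {p y : E} (hp : p ∈ cube d) (hy : y ∈ cube d) :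
    coordMax p y ∈ cube d :=
  fun i => ⟨le_max_of_le_left (hp i).1, max_le (hp i).2 (hy i).2⟩

theorem coordMin_mem_cube {p y : E} (hp : p ∈ cube d) (hy : y ∈ cube d) :
    coordMin p y ∈ cube d :=
  fun i => ⟨le_min (hp i).1 (hy i).1, min_le_of_left_le (hp i).2⟩

theorem DRSubmodularOn.coordMax_add_coordMin_le (hsub : DRSubmodularOn d f)
    (hgrad : ∀ x ∈ cube d, HasGradientWithinAt f (f' x) (cube d) x)
    {p y : E} (hp : p ∈ cube d) (hy : y ∈ cube d) :
    f (coordMax p y) + f (coordMin p y) - 2 * f p ≤ inner ℝ (f' p) (y - p) := by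
  have hup := hsub.sub_le_inner_grad hgrad hp (v := coordMax p y - p)
    (by rw [add_sub_cancel]; exact coordMax_mem_cube hp hy) (fun i => by simp)
  have hlo := hsub.inner_grad_le_sub hgrad (coordMin_mem_cube hp hy) (v := p - coordMin p y)
    (by rwa [add_sub_cancel]) (fun i => by simp)
  rw [add_sub_cancel] at hup hlo
  have hsplit : y - p = (coordMax p y - p) - (p - coordMin p y) := by
    ext i
    simp only [PiLp.sub_apply, coordMax_apply, coordMin_apply]
    linarith [max_add_min (p i) (y i)]
  rw [hsplit, inner_sub_right]
  linarith

/-- Concavity along the ray from `y` through `p ∨ y`, which stays in the cube up to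
parameter `1 / m`, and nonnegativity at its far end. -/
theorem DRSubmodularOn.one_sub_mul_le_coordMax (hsub : DRSubmodularOn d f)
    (hgrad : ∀ x ∈ cube d, HasGradientWithinAt f (f' x) (cube d) x)
    (hnonneg : ∀ x ∈ cube d, 0 ≤ f x) {p y : E} (hy : y ∈ cube d)
    {m : ℝ} (hm0 : 0 ≤ m) (hm1 : m ≤ 1) (hpm : ∀ i, p i ≤ m) :
    (1 - m) * f y ≤ f (coordMax p y) := by
  rcases hm0.eq_or_lt with rfl | hm
  · have hmax : coordMax p y = y := by
      ext i
      exact max_eq_right ((hpm i).trans (hy i).1)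
    simp [hmax]
  set v : E := m⁻¹ • (coordMax p y - y) with hv_def
  have hv : ∀ i, 0 ≤ v i := fun i => by
    simpa [v] using mul_nonneg (inv_nonneg.2 hm.le) (sub_nonneg.2 (le_max_right (p i) (y i)))
  have hyv : y + v ∈ cube d := by
    intro i
    obtain ⟨hy0, hy1⟩ := hy i
    have hgap : max (p i) (y i) - y i ≤ m * (1 - y i) := by
      rcases le_total (p i) (y i) with h | h <;> simp [h] <;> nlinarith [hpm i]
    rw [PiLp.add_apply]
    refine ⟨by linarith [hv i], ?_⟩
    simp only [hv_def, PiLp.smul_apply, PiLp.sub_apply, coordMax_apply, smul_eq_mul]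
    rw [← le_sub_iff_add_le', inv_mul_le_iff₀ hm]
    exact hgap
  have hconc := (hsub.concaveOn_comp_add_smul hgrad hy hyv hv).2 (left_mem_Icc.2 zero_le_one)
    (right_mem_Icc.2 zero_le_one) (sub_nonneg.2 hm1) hm.le (sub_add_cancel 1 m)
  have hend : y + m • v = coordMax p y := by
    simp [v, smul_smul, hm.ne']
  simp only [smul_eq_mul, mul_zero, mul_one, zero_add, zero_smul, add_zero, one_smul, hend]
    at hconc
  nlinarith [hnonneg _ hyv]

theorem DRSubmodularOn.one_sub_mul_sub_two_mul_le_inner_grad (hsub : DRSubmodularOn d f)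
    (hgrad : ∀ x ∈ cube d, HasGradientWithinAt f (f' x) (cube d) x)
    (hnonneg : ∀ x ∈ cube d, 0 ≤ f x) {p y : E} (hp : p ∈ cube d) (hy : y ∈ cube d)
    {m : ℝ} (hm0 : 0 ≤ m) (hm1 : m ≤ 1) (hpm : ∀ i, p i ≤ m) :
    (1 - m) * f y - 2 * f p ≤ inner ℝ (f' p) (y - p) := by
  have hexchange := hsub.coordMax_add_coordMin_le hgrad hp hy
  have hmax := hsub.one_sub_mul_le_coordMax hgrad hnonneg hy hm0 hm1 hpm
  have hmin := hnonneg _ (coordMin_mem_cube hp hy)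
  linarith

theorem one_sub_half_pos {z : ℝ} (hz : z ≤ 1) : 0 < 1 - z / 2 := by linarith

theorem continuousOn_one_div_mul_one_sub_half_pow {c : ℝ} (hc : 0 < c) (k : ℕ) :
    ContinuousOn (fun z : ℝ => 1 / (c * (1 - z / 2) ^ k)) (Icc 0 1) := by
  fun_prop (disch := (rintro z ⟨-, hz⟩; have := one_sub_half_pos hz; positivity))

theorem hasDerivAt_one_sub_half (z : ℝ) : HasDerivAt (fun z : ℝ => 1 - z / 2) (-(1 / 2)) z := by
  simpa using ((hasDerivAt_id z).div_const 2).const_sub 1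

theorem hasDerivAt_one_div_four_mul_one_sub_half {z : ℝ} (hz : 1 - z / 2 ≠ 0) :
    HasDerivAt (fun z : ℝ => 1 / (4 * (1 - z / 2))) (1 / (8 * (1 - z / 2) ^ 2)) z := by
  refine ((hasDerivAt_const z (1 : ℝ)).div ((hasDerivAt_one_sub_half z).const_mul 4)
    (mul_ne_zero four_ne_zero hz)).congr_deriv ?_
  generalize 1 - z / 2 = t at hz ⊢
  field_simp
  ring

theorem hasDerivAt_one_div_four_mul_one_sub_half_sq {z : ℝ} (hz : 1 - z / 2 ≠ 0) :
    HasDerivAt (fun z : ℝ => 1 / (4 * (1 - z / 2) ^ 2)) (2 * (1 / (8 * (1 - z / 2) ^ 3))) z := by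
  refine ((hasDerivAt_const z (1 : ℝ)).div (((hasDerivAt_one_sub_half z).pow 2).const_mul 4)
    (mul_ne_zero four_ne_zero (pow_ne_zero 2 hz))).congr_deriv ?_
  simp only [Pi.pow_apply]
  generalize 1 - z / 2 = t at hz ⊢
  field_simp
  ring

theorem integral_one_div_eight_mul_one_sub_half_cube :
    ∫ z in (0 : ℝ)..1, 1 / (8 * (1 - z / 2) ^ 3) = 3 / 8 := by
  have h := integral_eq_sub_of_hasDerivAt (fun z hz => hasDerivAt_one_div_four_mul_one_sub_half_sq
      (one_sub_half_pos (hz.2.trans (max_le zero_le_one le_rfl))).ne')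
    ((continuousOn_const.mul (continuousOn_one_div_mul_one_sub_half_pow (by norm_num) 3)
      ).intervalIntegrable_of_Icc zero_le_one)
  rw [intervalIntegral.integral_const_mul] at h
  have hends : (1 : ℝ) / (4 * (1 - 1 / 2) ^ 2) - 1 / (4 * (1 - 0 / 2) ^ 2) = 3 / 4 := by norm_num
  linarith

theorem integral_eq_sub_of_hasDerivWithinAt_Icc {φ φ' : ℝ → ℝ} {a b : ℝ} (hab : a ≤ b)
    (hφ : ∀ s ∈ Icc a b, HasDerivWithinAt φ (φ' s) (Icc a b) s)
    (hint : IntervalIntegrable φ' volume a b) :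
    ∫ s in a..b, φ' s = φ b - φ a :=
  integral_eq_sub_of_hasDeriv_right_of_le hab (fun s hs => (hφ s hs).continuousWithinAt)
    (fun s hs => (hφ s (Ioo_subset_Icc_self hs)).mono_of_mem_nhdsWithin
      (Icc_mem_nhdsGT_of_mem ⟨hs.1.le, hs.2⟩)) hint

theorem inner_intervalIntegral_left {F : Type*} [NormedAddCommGroup F] [InnerProductSpace ℝ F]
    [CompleteSpace F] {φ : ℝ → F} {a b : ℝ} (hφ : IntervalIntegrable φ volume a b)
    (c : F) :
    inner ℝ (∫ s in a..b, φ s) c = ∫ s in a..b, inner ℝ (φ s) c := by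
  simpa only [innerSL_apply_apply, real_inner_comm c] using
    ((innerSL ℝ c).intervalIntegral_comp_comm hφ).symm

/-- The gradient `g` of the boosting surrogate of `f` anchored at `u`. -/
def boostedGrad (f' : E → E) (u x : E) : E :=
  ∫ z in (0 : ℝ)..1, (1 / (8 * (1 - z / 2) ^ 3)) • f' ((z / 2) • (x - u) + u)

/-- The subtracted term is the derivative of `z ↦ f (u + z • v) / (4 (1 - z/2)²)` when
`p = u + z • v`. -/
theorem DRSubmodularOn.boosting_pointwise (hsub : DRSubmodularOn d f)
    (hgrad : ∀ x ∈ cube d, HasGradientWithinAt f (f' x) (cube d) x)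
    (hnonneg : ∀ x ∈ cube d, 0 ≤ f x) {p v x y : E} {ν z : ℝ}
    (hp : p ∈ cube d) (hy : y ∈ cube d) (hx : x = p + (2 - z) • v)
    (hν0 : 0 ≤ ν) (hν1 : ν ≤ 1) (hz : z ∈ Icc (0 : ℝ) 1)
    (hpm : ∀ i, p i ≤ z / 2 + (1 - z / 2) * ν) :
    (1 - ν) * f y * (1 / (8 * (1 - z / 2) ^ 2)) -
        (inner ℝ (f' p) v * (1 / (4 * (1 - z / 2) ^ 2)) +
          f p * (2 * (1 / (8 * (1 - z / 2) ^ 3))))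
      ≤ inner ℝ ((1 / (8 * (1 - z / 2) ^ 3)) • f' p) (y - x) := by
  obtain ⟨hz0, hz1⟩ := hz
  have ht := one_sub_half_pos hz1
  have key := hsub.one_sub_mul_sub_two_mul_le_inner_grad hgrad hnonneg hp hy
    (by positivity) (by nlinarith) hpm
  have hkey := mul_le_mul_of_nonneg_left key (by positivity : 0 ≤ 1 / (8 * (1 - z / 2) ^ 3))
  have hsplit :
      inner ℝ (f' p) (y - x) = inner ℝ (f' p) (y - p) - (2 - z) * inner ℝ (f' p) v := by
    rw [hx, sub_add_eq_sub_sub, inner_sub_right, real_inner_smul_right]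
  have hfy : 1 / (8 * (1 - z / 2) ^ 3) * (1 - (z / 2 + (1 - z / 2) * ν)) =
      (1 - ν) * (1 / (8 * (1 - z / 2) ^ 2)) := by
    rw [one_div_mul_eq_div, mul_one_div, div_eq_div_iff (by positivity) (by positivity)]
    ring
  have hfv : 1 / (8 * (1 - z / 2) ^ 3) * (2 - z) = 1 / (4 * (1 - z / 2) ^ 2) := by
    rw [one_div_mul_eq_div, div_eq_div_iff (by positivity) (by positivity)]
    ring
  rw [real_inner_smul_left]
  linear_combination
    hkey - 1 / (8 * (1 - z / 2) ^ 3) * hsplit + inner ℝ (f' p) v * hfv - f y * hfy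

theorem DRSubmodularOn.boosting_ineq (hsub : DRSubmodularOn d f)
    (hgrad : ∀ x ∈ cube d, HasGradientWithinAt f (f' x) (cube d) x)
    (hcont : ContinuousOn f' (cube d)) (hnonneg : ∀ x ∈ cube d, 0 ≤ f x)
    {u x y : E} (hu : u ∈ cube d) (hx : x ∈ cube d) (hy : y ∈ cube d)
    {ν : ℝ} (hν0 : 0 ≤ ν) (hν1 : ν ≤ 1) (huν : ∀ i, u i ≤ ν) :
    (1 - ν) / 4 * f y - f ((2 : ℝ)⁻¹ • (x + u)) ≤
      inner ℝ (boostedGrad f' u x) (y - x) := by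
  set v : E := (2 : ℝ)⁻¹ • (x - u) with hv
  have hcurve : ∀ z : ℝ, (z / 2) • (x - u) + u = u + z • v := fun z => by rw [hv]; module
  have hmid : (2 : ℝ)⁻¹ • (x + u) = u + (1 : ℝ) • v := by rw [hv]; module
  have hmem : ∀ z ∈ Icc (0 : ℝ) 1, u + z • v ∈ cube d := fun z hz =>
    convex_cube.add_smul_mem hu (convex_cube.add_smul_mem hu (by rwa [add_sub_cancel])
      ⟨by norm_num, by norm_num⟩) hz
  have hF : ContinuousOn (fun z : ℝ => f (u + z • v)) (Icc 0 1) := fun z hz =>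
    (hasDerivWithinAt_comp_add_smul hgrad hmem hz).continuousWithinAt
  have hF' : ContinuousOn (fun z : ℝ => f' (u + z • v)) (Icc 0 1) :=
    hcont.comp (by fun_prop) hmem
  have hW := continuousOn_one_div_mul_one_sub_half_pow (c := 8) (by norm_num) 3
  have hQ := continuousOn_one_div_mul_one_sub_half_pow (c := 4) (by norm_num) 2
  have hA := continuousOn_one_div_mul_one_sub_half_pow (c := 8) (by norm_num) 2
  set lower : ℝ → ℝ := fun z => (1 - ν) * f y * (1 / (8 * (1 - z / 2) ^ 2)) -
    (inner ℝ (f' (u + z • v)) v * (1 / (4 * (1 - z / 2) ^ 2)) +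
      f (u + z • v) * (2 * (1 / (8 * (1 - z / 2) ^ 3))))
  have hlower : IntervalIntegrable lower volume 0 1 :=
    ((continuousOn_const.mul hA).sub (((hF'.inner continuousOn_const).mul hQ).add
      (hF.mul (continuousOn_const.mul hW)))).intervalIntegrable_of_Icc zero_le_one
  have hint_lower :
      ∫ z in (0 : ℝ)..1, lower z = (1 - ν) / 4 * f y - f (u + (1 : ℝ) • v) + f u / 4 := by
    rw [integral_eq_sub_of_hasDerivWithinAt_Icc zero_le_one
      (φ := fun z => (1 - ν) * f y * (1 / (4 * (1 - z / 2))) -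
        f (u + z • v) * (1 / (4 * (1 - z / 2) ^ 2)))
      (fun z hz => ((hasDerivAt_one_div_four_mul_one_sub_half
          (one_sub_half_pos hz.2).ne').hasDerivWithinAt.const_mul _).sub
        ((hasDerivWithinAt_comp_add_smul hgrad hmem hz).mul
          (hasDerivAt_one_div_four_mul_one_sub_half_sq
            (one_sub_half_pos hz.2).ne').hasDerivWithinAt))
      hlower]
    norm_num
    ring
  have hmono : ∫ z in (0 : ℝ)..1, lower z ≤
      ∫ z in (0 : ℝ)..1, inner ℝ ((1 / (8 * (1 - z / 2) ^ 3)) • f' (u + z • v)) (y - x) :=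
    integral_mono_on zero_le_one hlower
      (((hW.smul hF').inner continuousOn_const).intervalIntegrable_of_Icc zero_le_one)
      fun z hz => hsub.boosting_pointwise hgrad hnonneg (hmem z hz) hy
        (by rw [hv]; module : x = u + z • v + (2 - z) • v) hν0 hν1 hz fun i => by
          simp only [hv, PiLp.add_apply, PiLp.smul_apply, PiLp.sub_apply, smul_eq_mul]
          nlinarith [huν i, (hx i).2, (hu i).1, hz.1, hz.2]
  rw [hint_lower, ← inner_intervalIntegral_left
    (by exact (hW.smul hF').intervalIntegrable_of_Icc zero_le_one)] at hmono
  simp only [boostedGrad, hcurve, hmid]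
  linarith [hnonneg u hu]

theorem norm_boostedGrad_le {G : ℝ} (hbdd : ∀ x ∈ cube d, ‖f' x‖ ≤ G)
    {u x : E} (hu : u ∈ cube d) (hx : x ∈ cube d) :
    ‖boostedGrad f' u x‖ ≤ 3 / 8 * G := by
  have hmem : ∀ z ∈ Icc (0 : ℝ) 1, (z / 2) • (x - u) + u ∈ cube d := fun z hz => by
    rw [add_comm]
    exact convex_cube.add_smul_mem hu (by rwa [add_sub_cancel])
      ⟨by linarith [hz.1], by linarith [hz.2]⟩
  rw [boostedGrad]
  calc _ ≤ ∫ z in (0 : ℝ)..1, 1 / (8 * (1 - z / 2) ^ 3) * G := by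
        refine norm_integral_le_of_norm_le zero_le_one (ae_of_all _ fun z hz => ?_)
          (((continuousOn_one_div_mul_one_sub_half_pow (by norm_num) 3).mul
            continuousOn_const).intervalIntegrable_of_Icc zero_le_one)
        have hw : 0 ≤ 1 / (8 * (1 - z / 2) ^ 3) := by have := one_sub_half_pos hz.2; positivity
        rw [norm_smul, Real.norm_of_nonneg hw]
        exact mul_le_mul_of_nonneg_left (hbdd _ (hmem z (Ioc_subset_Icc_self hz))) hw
    _ = 3 / 8 * G := by
        rw [intervalIntegral.integral_mul_const, integral_one_div_eight_mul_one_sub_half_cube]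

theorem Convex.sub_le_mul_norm_sub_of_norm_grad_le {C : Set E} (hC : Convex ℝ C)
    (hgrad : ∀ x ∈ C, HasGradientWithinAt f (f' x) C x)
    {G : ℝ} (hbdd : ∀ x ∈ C, ‖f' x‖ ≤ G) {x y : E} (hx : x ∈ C) (hy : y ∈ C) :
    f x - f y ≤ G * ‖x - y‖ := by
  have h := hC.norm_image_sub_le_of_norm_hasFDerivWithin_le
    (fun z hz => (hgrad z hz).hasFDerivWithinAt)
    (fun z hz => ((InnerProductSpace.toDual ℝ E).norm_map (f' z)).trans_le (hbdd z hz)) hy hx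
  exact (le_abs_self _).trans h

theorem DRSubmodularOn.boosting_ineq_add_consensus_error (hsub : DRSubmodularOn d f)
    (hgrad : ∀ x ∈ cube d, HasGradientWithinAt f (f' x) (cube d) x)
    (hcont : ContinuousOn f' (cube d)) (hnonneg : ∀ x ∈ cube d, 0 ≤ f x)
    {G : ℝ} (hbdd : ∀ x ∈ cube d, ‖f' x‖ ≤ G)
    {u x x' y : E} (hu : u ∈ cube d) (hx : x ∈ cube d) (hx' : x' ∈ cube d) (hy : y ∈ cube d)
    {ν : ℝ} (hν0 : 0 ≤ ν) (hν1 : ν ≤ 1) (huν : ∀ i, u i ≤ ν) :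
    (1 - ν) / 4 * f y - f ((2 : ℝ)⁻¹ • (x' + u)) ≤
      inner ℝ (boostedGrad f' u x) (y - x') + G * ‖x - x'‖ := by
  set g := boostedGrad f' u x
  have hmid_mem : ∀ {c : E}, c ∈ cube d → (2 : ℝ)⁻¹ • (c + u) ∈ cube d := fun hc => by
    simpa only [smul_add] using convex_cube hc hu (by norm_num) (by norm_num) (by norm_num)
  have hcore := hsub.boosting_ineq hgrad hcont hnonneg hu hx hy hν0 hν1 huν
  have hlip :=
    convex_cube.sub_le_mul_norm_sub_of_norm_grad_le hgrad hbdd (hmid_mem hx) (hmid_mem hx')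
  have hmid_dist :
      ‖(2 : ℝ)⁻¹ • (x + u) - (2 : ℝ)⁻¹ • (x' + u)‖ = 2⁻¹ * ‖x - x'‖ := by
    rw [← smul_sub, add_sub_add_right_eq_sub, norm_smul, Real.norm_of_nonneg (by norm_num)]
  have hshift : inner ℝ g (y - x) = inner ℝ g (y - x') + inner ℝ g (x' - x) := by
    rw [← inner_add_right, sub_add_sub_cancel]
  have hcs : inner ℝ g (x' - x) ≤ 3 / 8 * G * ‖x - x'‖ :=
    (real_inner_le_norm _ _).trans (by
      rw [norm_sub_rev]
      exact mul_le_mul_of_nonneg_right (norm_boostedGrad_le hbdd hu hx) (norm_nonneg _))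
  have hG : 0 ≤ G * ‖x - x'‖ := mul_nonneg ((norm_nonneg _).trans (hbdd u hu)) (norm_nonneg _)
  rw [hmid_dist] at hlip
  linarith

end

theorem reduction_boosting_nonmonotone_general
    (d n T : ℕ)
    (K : Set (EuclideanSpace ℝ (Fin d))) (hKX : K ⊆ cube d)
    (u : EuclideanSpace ℝ (Fin d)) (hu : u ∈ K)
    (α ν : ℝ) (hν : ν = ⨆ i, |u i|) (hα : α = (1 - ν) / 4)
    (G : ℝ)
    (f : Fin T → Fin n → EuclideanSpace ℝ (Fin d) → ℝ)
    (f' : Fin T → Fin n → EuclideanSpace ℝ (Fin d) → EuclideanSpace ℝ (Fin d))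
    (hsub : ∀ t j, DRSubmodularOn d (f t j))
    (hnonneg : ∀ t j, ∀ x ∈ cube d, 0 ≤ f t j x)
    (hgrad : ∀ t j, ∀ x ∈ cube d, HasGradientWithinAt (f t j) (f' t j x) (cube d) x)
    (hcont : ∀ t j, ContinuousOn (f' t j) (cube d))
    (hbdd : ∀ t j, ∀ x ∈ cube d, ‖f' t j x‖ ≤ G)
    (xhat : Fin T → Fin n → EuclideanSpace ℝ (Fin d))
    (hxhat : ∀ t j, xhat t j ∈ K)
    (xdec : Fin T → Fin n → EuclideanSpace ℝ (Fin d))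
    (hxdec : ∀ t j, xdec t j = (2:ℝ)⁻¹ • (xhat t j + u))
    (g : Fin T → Fin n → EuclideanSpace ℝ (Fin d) → EuclideanSpace ℝ (Fin d))
    (hg : ∀ t j, ∀ x ∈ K, g t j x =
      ∫ z in (0:ℝ)..1, (1 / (8 * (1 - z / 2) ^ 3)) • f' t j ((z / 2) • (x - u) + u)) :
    ∀ i : Fin n, ∀ x ∈ K,
      α * (∑ t, ∑ j, f t j x) - ∑ t, ∑ j, f t j (xdec t i) ≤
        (∑ t, ∑ j, (inner ℝ (g t j (xhat t j)) (x - xhat t i) : ℝ)) +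
          G * ∑ t, ∑ j, ‖xhat t j - xhat t i‖ := by
  intro i x hx
  have huX := hKX hu
  have hν0 : 0 ≤ ν := hν ▸ Real.iSup_nonneg fun k => abs_nonneg (u k)
  have hν1 : ν ≤ 1 :=
    hν ▸ Real.iSup_le (fun k => (abs_of_nonneg (huX k).1).trans_le (huX k).2) zero_le_one
  have huν : ∀ k, u k ≤ ν := fun k =>
    hν ▸ (le_abs_self _).trans (le_ciSup (f := fun k => |u k|) (Set.finite_range _).bddAbove k)
  have hterm : ∀ t j, α * f t j x - f t j (xdec t i) ≤
      inner ℝ (g t j (xhat t j)) (x - xhat t i) + G * ‖xhat t j - xhat t i‖ := fun t j => by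
    rw [hα, hxdec, hg t j _ (hxhat t j), ← boostedGrad]
    exact (hsub t j).boosting_ineq_add_consensus_error (hgrad t j) (hcont t j) (hnonneg t j)
      (hbdd t j) huX (hKX (hxhat t j)) (hKX (hxhat t i)) (hKX hx) hν0 hν1 huν
  calc α * (∑ t, ∑ j, f t j x) - ∑ t, ∑ j, f t j (xdec t i)
      = ∑ t, ∑ j, (α * f t j x - f t j (xdec t i)) := by
        simp only [Finset.mul_sum, Finset.sum_sub_distrib]
    _ ≤ ∑ t, ∑ j,
          (inner ℝ (g t j (xhat t j)) (x - xhat t i) + G * ‖xhat t j - xhat t i‖) :=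
        Finset.sum_le_sum fun t _ => Finset.sum_le_sum fun j _ => hterm t j
    _ = _ := by simp only [Finset.mul_sum, Finset.sum_add_distrib]

/-- deterministic core of Theorem 1: reduction of the
`((1-ν)/4)`-regret of D-OCSM to the regret of D-OCO on the boosted linear losses,
plus the cumulative consensus error. -/
theorem reduction_boosting_nonmonotone
    (d n T : ℕ) (hd : 1 ≤ d) (hn : 1 ≤ n) (hT : 1 ≤ T)
    (K : Set (EuclideanSpace ℝ (Fin d))) (hKcvx : Convex ℝ K) (hKX : K ⊆ cube d)
    (u : EuclideanSpace ℝ (Fin d)) (hu : u ∈ K)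
    (α ν : ℝ) (hν : ν = ⨆ i, |u i|) (hα : α = (1 - ν) / 4)
    (G : ℝ)
    (f : Fin T → Fin n → EuclideanSpace ℝ (Fin d) → ℝ)
    (f' : Fin T → Fin n → EuclideanSpace ℝ (Fin d) → EuclideanSpace ℝ (Fin d))
    (hsub : ∀ t j, DRSubmodularOn d (f t j))
    (hnonneg : ∀ t j, ∀ x ∈ cube d, 0 ≤ f t j x)
    (hgrad : ∀ t j, ∀ x ∈ cube d, HasGradientWithinAt (f t j) (f' t j x) (cube d) x)
    (hcont : ∀ t j, ContinuousOn (f' t j) (cube d))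
    (hbdd : ∀ t j, ∀ x ∈ cube d, ‖f' t j x‖ ≤ G)
    (xhat : Fin T → Fin n → EuclideanSpace ℝ (Fin d))
    (hxhat : ∀ t j, xhat t j ∈ K)
    (xdec : Fin T → Fin n → EuclideanSpace ℝ (Fin d))
    (hxdec : ∀ t j, xdec t j = (2:ℝ)⁻¹ • (xhat t j + u))
    (g : Fin T → Fin n → EuclideanSpace ℝ (Fin d) → EuclideanSpace ℝ (Fin d))
    (hg : ∀ t j, ∀ x ∈ K, g t j x =
      ∫ z in (0:ℝ)..1, (1 / (8 * (1 - z / 2) ^ 3)) • f' t j ((z / 2) • (x - u) + u)) :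
    ∀ i : Fin n, ∀ x ∈ K,
      α * (∑ t, ∑ j, f t j x) - ∑ t, ∑ j, f t j (xdec t i) ≤
        (∑ t, ∑ j, (inner ℝ (g t j (xhat t j)) (x - xhat t i) : ℝ)) +
          G * ∑ t, ∑ j, ‖xhat t j - xhat t i‖ :=
  reduction_boosting_nonmonotone_general d n T K hKX u hu α ν hν hα G f f' hsub hnonneg hgrad hcont
    hbdd xhat hxhat xdec hxdec g hg
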